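/- Let D = [0,1]^d and ν a probability measure on D absolutely continuous with respect to Lebesgue measure. Let (ε_N) ⊂ ℝ₊ with ε_N → 0, let h_N = 2^{−N} be dyadic grid sizes, and let (X^N, g^N) be tuples of n pairwise distinct sites and weights converging to (X, g) with X pairwise distinct. Define the piecewise constant functions χ_i^{ε,h}[X,g] that on the interior of each grid cell D_h^α take the constant value χ_i^ε[X,g](y_h^α), where y_h^α is the cell center. Then for each i, χ_i^{ε_N,h_N}[X^N, g^N] converges in L¹(ν) to the indicator function χ_{L_i[X,g]} of the Laguerre cell. -/

import Mathlib

open MeasureTheory Set Filter Topology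
open scoped ENNReal NNReal

noncomputable section

/-- Euclidean space `ℝ^d`. -/
abbrev Euc (d : ℕ) : Type := EuclideanSpace ℝ (Fin d)

/-- `ρ ⪯ μ` in the convex order: `∫ ψ dρ ≤ ∫ ψ dμ` for every convex function `ψ` for which
both integrals exist. -/
def ConvexOrderLE {d : ℕ} (ρ μ : Measure (Euc d)) : Prop :=
  ∀ ψ : Euc d → ℝ, ConvexOn ℝ Set.univ ψ → Integrable ψ μ → Integrable ψ ρ →
    ∫ x, ψ x ∂ρ ≤ ∫ x, ψ x ∂μ

/-- The set of fusions of `ν`: probability measures supported on `D` that are dominated by `ν`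
in the convex order. -/
def fusions {d : ℕ} (D : Set (Euc d)) (ν : Measure (Euc d)) : Set (Measure (Euc d)) :=
  {ρ | IsProbabilityMeasure ρ ∧ ρ Dᶜ = 0 ∧ ConvexOrderLE ρ ν}

/-- The (topological) support of a measure. -/
def msupport {d : ℕ} (ρ : Measure (Euc d)) : Set (Euc d) := {x | ∀ U ∈ nhds x, ρ U ≠ 0}

/-- Laguerre cell of site `x_i` with weight `g_i` inside the domain `D`. -/
def LaguerreCell {d n : ℕ} (D : Set (Euc d)) (X : Fin n → Euc d) (g : Fin n → ℝ)
    (i : Fin n) : Set (Euc d) :=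
  {y ∈ D | ∀ j, ‖y - X i‖ ^ 2 - g i ≤ ‖y - X j‖ ^ 2 - g j}

/-- ν-mass of the `i`-th Laguerre cell. -/
def cellMass {d n : ℕ} (D : Set (Euc d)) (ν : Measure (Euc d)) (X : Fin n → Euc d)
    (g : Fin n → ℝ) (i : Fin n) : ℝ :=
  (ν (LaguerreCell D X g i)).toReal

/-- ν-barycenter of the `i`-th Laguerre cell. -/
def cellBary {d n : ℕ} (D : Set (Euc d)) (ν : Measure (Euc d)) (X : Fin n → Euc d)
    (g : Fin n → ℝ) (i : Fin n) : Euc d :=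
  (cellMass D ν X g i)⁻¹ • ∫ y in LaguerreCell D X g i, y ∂ν

/-- Entropy-regularized cell function
`χ_i^ε[X,g](y) = exp((g_i − |y−x_i|²)/ε) / Σ_j exp((g_j − |y−x_j|²)/ε)`. -/
def chiEps {d n : ℕ} (X : Fin n → Euc d) (g : Fin n → ℝ) (ε : ℝ) (i : Fin n)
    (y : Euc d) : ℝ :=
  Real.exp ((g i - ‖y - X i‖ ^ 2) / ε) / ∑ j, Real.exp ((g j - ‖y - X j‖ ^ 2) / ε)

/-- Regularized mass `m_i^ε[X,g] = ∫ χ_i^ε[X,g] dν`. -/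
def mEps {d n : ℕ} (ν : Measure (Euc d)) (X : Fin n → Euc d) (g : Fin n → ℝ) (ε : ℝ)
    (i : Fin n) : ℝ :=
  ∫ y, chiEps X g ε i y ∂ν

/-- Regularized barycenter `b_i^ε[X,g] = (m_i^ε)⁻¹ ∫ y χ_i^ε[X,g](y) dν(y)`. -/
def bEps {d n : ℕ} (ν : Measure (Euc d)) (X : Fin n → Euc d) (g : Fin n → ℝ) (ε : ℝ)
    (i : Fin n) : Euc d :=
  (mEps ν X g ε i)⁻¹ • ∫ y, chiEps X g ε i y • y ∂ν

/-- The unit cube `[0,1]^d`. -/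
def unitCube (d : ℕ) : Set (Euc d) := {y | ∀ j, y j ∈ Icc (0 : ℝ) 1}

/-- Center of the dyadic grid cell of size `h` containing `y` (coordinatewise). -/
def gridCenter {d : ℕ} (h : ℝ) (y : Euc d) : Euc d :=
  WithLp.toLp 2 (fun j => ((⌊y j / h⌋ : ℝ) + 1 / 2) * h)

/-- Spatially discretized entropy-regularized cell function `χ_i^{ε,h}[X,g]`, taking on (the
interior of) each grid cell the value of `χ_i^ε[X,g]` at the cell center. -/
def chiEpsH {d n : ℕ} (X : Fin n → Euc d) (g : Fin n → ℝ) (ε h : ℝ) (i : Fin n)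
    (y : Euc d) : ℝ :=
  chiEps X g ε i (gridCenter h y)

/-!
Off the bisectors `{y | |y - x_i|² - g_i = |y - x_j|² - g_j}`, which are hyperplanes because the
sites are distinct and hence `ν`-null, the scores `g_j - |y - x_j|²` have no tie at their maximum.
Moving `y` to its grid centre and `(X, g)` to `(X^N, g^N)` perturbs the scores only slightly, so
after division by `ε_N → 0` the softmax `χ_i` tends to `1` when `i` is the unique maximiser
(`y ∈ L_i`) and to `0` when some score beats the `i`-th one (`y ∉ L_i`). As `0 ≤ χ_i ≤ 1`,
dominated convergence turns this `ν`-a.e. convergence into convergence in `L¹(ν)`.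
-/
section Hyperplane

variable {E : Type*} [NormedAddCommGroup E] [InnerProductSpace ℝ E] [FiniteDimensional ℝ E]
  [MeasurableSpace E] [BorelSpace E] (μ : Measure E) [μ.IsAddHaarMeasure]

theorem addHaar_setOf_inner_eq {v : E} (hv : v ≠ 0) (r : ℝ) :
    μ {y | inner ℝ v y = r} = 0 := by
  let f : E →ᵃ[ℝ] ℝ := (innerₗ E v).toAffineMap
  have hS : {y | inner ℝ v y = r} = (AffineSubspace.comap f (affineSpan ℝ {r}) : Set E) := by
    ext y; simp [f]
  rw [hS]
  refine Measure.addHaar_affineSubspace μ _ fun htop => hv ?_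
  have hmem : ∀ y, y ∈ {y | inner ℝ v y = r} := fun y => by rw [hS, htop]; trivial
  have hr : r = 0 := by simpa using (hmem 0).symm
  simpa [hr] using hmem v

theorem addHaar_setOf_sqDist_sub_eq {a b : E} (hab : a ≠ b) (c₁ c₂ : ℝ) :
    μ {y | ‖y - a‖ ^ 2 - c₁ = ‖y - b‖ ^ 2 - c₂} = 0 := by
  have hS : {y | ‖y - a‖ ^ 2 - c₁ = ‖y - b‖ ^ 2 - c₂} =
      {y | inner ℝ (b - a) y = (‖b‖ ^ 2 - ‖a‖ ^ 2 + c₁ - c₂) / 2} := by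
    ext y
    simp only [mem_ofPred_eq, norm_sub_sq_real, inner_sub_left, real_inner_comm y]
    constructor <;> intro h <;> linarith
  rw [hS]
  exact addHaar_setOf_inner_eq μ (sub_ne_zero.mpr hab.symm) _

end Hyperplane

theorem abs_floor_add_half_mul_sub_le {h : ℝ} (hh : 0 < h) (x : ℝ) :
    |((⌊x / h⌋ : ℝ) + 1 / 2) * h - x| ≤ h / 2 := by
  have hx : x = x / h * h := (div_mul_cancel₀ x hh.ne').symm
  have hfloor := Int.floor_le (x / h)
  have hceil := Int.lt_floor_add_one (x / h)
  rw [abs_le]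
  constructor <;> nlinarith

theorem tendsto_gridCenter {α : Type*} {l : Filter α} {h : α → ℝ} (hh : Tendsto h l (𝓝[>] 0))
    {d : ℕ} (y : Euc d) : Tendsto (fun t => gridCenter (h t) y) l (𝓝 y) := by
  refine (PiLp.continuous_toLp 2 _).continuousAt.tendsto.comp
    (tendsto_pi_nhds.mpr fun j => ?_)
  have hpos : ∀ᶠ t in l, 0 < h t := hh.eventually self_mem_nhdsWithin
  have hbound : ∀ᶠ t in l, dist (((⌊y j / h t⌋ : ℝ) + 1 / 2) * h t) (y j) ≤ h t / 2 :=
    hpos.mono fun t ht => abs_floor_add_half_mul_sub_le ht (y j)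
  refine tendsto_iff_dist_tendsto_zero.mpr
    (squeeze_zero' (Eventually.of_forall fun _ => dist_nonneg) hbound ?_)
  simpa using (tendsto_nhds_of_tendsto_nhdsWithin hh).div_const 2

section Softmax

variable {α ι : Type*} [Fintype ι] {l : Filter α} {G : α → ι → ℝ} {A : ι → ℝ} {ε : α → ℝ}

theorem exp_div_sum_exp_eq_inv (x : ι → ℝ) (c : ℝ) (i : ι) :
    Real.exp (x i / c) / ∑ j, Real.exp (x j / c) = (∑ j, Real.exp ((x j - x i) / c))⁻¹ := by
  simp only [sub_div, Real.exp_sub, ← Finset.sum_div, inv_div]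

theorem tendsto_exp_div_sum_exp_of_lt (hG : ∀ j, Tendsto (G · j) l (𝓝 (A j)))
    (hε : Tendsto ε l (𝓝[>] 0)) {i j : ι} (hij : A i < A j) :
    Tendsto (fun t => Real.exp (G t i / ε t) / ∑ k, Real.exp (G t k / ε t)) l (𝓝 0) := by
  simp only [exp_div_sum_exp_eq_inv]
  refine Tendsto.inv_tendsto_atTop (tendsto_atTop_mono (fun t => Finset.single_le_sum
    (f := fun k => Real.exp ((G t k - G t i) / ε t)) (fun k _ => (Real.exp_pos _).le)
    (Finset.mem_univ j)) (Real.tendsto_exp_atTop.comp ?_))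
  simp only [div_eq_mul_inv]
  exact ((hG j).sub (hG i)).pos_mul_atTop (sub_pos.mpr hij) (tendsto_inv_nhdsGT_zero.comp hε)

theorem tendsto_exp_div_sum_exp_of_forall_lt (hG : ∀ j, Tendsto (G · j) l (𝓝 (A j)))
    (hε : Tendsto ε l (𝓝[>] 0)) {i : ι} (hi : ∀ j ≠ i, A j < A i) :
    Tendsto (fun t => Real.exp (G t i / ε t) / ∑ k, Real.exp (G t k / ε t)) l (𝓝 1) := by
  classical
  simp only [exp_div_sum_exp_eq_inv]
  have hterm : ∀ j, Tendsto (fun t => Real.exp ((G t j - G t i) / ε t)) l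
      (𝓝 (if j = i then 1 else 0)) := by
    intro j
    split_ifs with hj
    · simpa [hj] using tendsto_const_nhds
    · refine Real.tendsto_exp_atBot.comp ?_
      simp only [div_eq_mul_inv]
      exact ((hG j).sub (hG i)).neg_mul_atTop (sub_neg.mpr (hi j hj))
        (tendsto_inv_nhdsGT_zero.comp hε)
  simpa using (tendsto_finsetSum Finset.univ fun j _ => hterm j).inv₀ (by simp)

end Softmax

theorem tendsto_integral_norm_sub_of_tendsto_ae {α E : Type*} [MeasurableSpace α]
    [NormedAddCommGroup E] {μ : Measure α} [IsFiniteMeasure μ] {F : ℕ → α → E} {f : α → E}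
    {C : ℝ} (hF : ∀ n, AEStronglyMeasurable (F n) μ) (hFC : ∀ n, ∀ᵐ x ∂μ, ‖F n x‖ ≤ C)
    (hlim : ∀ᵐ x ∂μ, Tendsto (F · x) atTop (𝓝 (f x))) :
    Tendsto (fun n => ∫ x, ‖F n x - f x‖ ∂μ) atTop (𝓝 0) := by
  have hf : AEStronglyMeasurable f μ := aestronglyMeasurable_of_tendsto_ae atTop hF hlim
  have hfC : ∀ᵐ x ∂μ, ‖f x‖ ≤ C := by
    filter_upwards [ae_all_iff.mpr hFC, hlim] with x hx hxlim
    exact le_of_tendsto' hxlim.norm hx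
  have hbound : ∀ n, ∀ᵐ x ∂μ, ‖‖F n x - f x‖‖ ≤ C + C := fun n => by
    filter_upwards [hFC n, hfC] with x hFx hfx
    rw [norm_norm]
    exact (norm_sub_le _ _).trans (add_le_add hFx hfx)
  have hlim' : ∀ᵐ x ∂μ, Tendsto (fun n => ‖F n x - f x‖) atTop (𝓝 0) := by
    filter_upwards [hlim] with x hx
    simpa using (hx.sub_const (f x)).norm
  simpa using tendsto_integral_of_dominated_convergence (fun _ => C + C)
    (fun n => ((hF n).sub hf).norm) (integrable_const _) hbound hlim'

section ChiEps

variable {d n : ℕ}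

theorem chiEps_nonneg (X : Fin n → Euc d) (g : Fin n → ℝ) (ε : ℝ) (i : Fin n) (y : Euc d) :
    0 ≤ chiEps X g ε i y := by
  unfold chiEps; positivity

theorem chiEps_le_one (X : Fin n → Euc d) (g : Fin n → ℝ) (ε : ℝ) (i : Fin n) (y : Euc d) :
    chiEps X g ε i y ≤ 1 := by
  unfold chiEps
  refine div_le_one_of_le₀ ?_ (by positivity)
  exact Finset.single_le_sum (f := fun j => Real.exp ((g j - ‖y - X j‖ ^ 2) / ε))
    (fun j _ => (Real.exp_pos _).le) (Finset.mem_univ i)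

theorem continuous_chiEps (X : Fin n → Euc d) (g : Fin n → ℝ) (ε : ℝ) (i : Fin n) :
    Continuous (chiEps X g ε i) := by
  unfold chiEps
  exact Continuous.div (by fun_prop) (by fun_prop) fun y =>
    (Finset.sum_pos (fun j _ => Real.exp_pos _) ⟨i, Finset.mem_univ i⟩).ne'

theorem measurable_gridCenter (h : ℝ) : Measurable (gridCenter (d := d) h) := by
  unfold gridCenter; fun_prop

theorem measurable_chiEpsH (X : Fin n → Euc d) (g : Fin n → ℝ) (ε h : ℝ) (i : Fin n) :
    Measurable (chiEpsH X g ε h i) :=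
  (continuous_chiEps X g ε i).measurable.comp (measurable_gridCenter h)

theorem tendsto_chiEps_indicator_laguerreCell {α : Type*} {l : Filter α}
    {Xs : α → Fin n → Euc d} {gs : α → Fin n → ℝ} {εs : α → ℝ} {z : α → Euc d}
    {D : Set (Euc d)} {X : Fin n → Euc d} {g : Fin n → ℝ} {y : Euc d} {i : Fin n}
    (hXs : ∀ j, Tendsto (Xs · j) l (𝓝 (X j))) (hgs : ∀ j, Tendsto (gs · j) l (𝓝 (g j)))
    (hz : Tendsto z l (𝓝 y)) (hεs : Tendsto εs l (𝓝[>] 0)) (hyD : y ∈ D)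
    (hy : ∀ j ≠ i, ‖y - X i‖ ^ 2 - g i ≠ ‖y - X j‖ ^ 2 - g j) :
    Tendsto (fun t => chiEps (Xs t) (gs t) (εs t) i (z t)) l
      (𝓝 ((LaguerreCell D X g i).indicator 1 y)) := by
  have hG : ∀ j, Tendsto (fun t => gs t j - ‖z t - Xs t j‖ ^ 2) l
      (𝓝 (g j - ‖y - X j‖ ^ 2)) := fun j => (hgs j).sub (((hz.sub (hXs j)).norm).pow 2)
  by_cases hyL : y ∈ LaguerreCell D X g i
  · rw [indicator_of_mem hyL, Pi.one_apply]
    refine tendsto_exp_div_sum_exp_of_forall_lt hG hεs fun j hj => ?_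
    linarith [lt_of_le_of_ne (hyL.2 j) (hy j hj)]
  · rw [indicator_of_notMem hyL]
    obtain ⟨j, hj⟩ : ∃ j, ¬ ‖y - X i‖ ^ 2 - g i ≤ ‖y - X j‖ ^ 2 - g j := by
      simpa [LaguerreCell, hyD] using hyL
    exact tendsto_exp_div_sum_exp_of_lt hG hεs (j := j) (by linarith)

end ChiEps

theorem chiEpsH_L1_convergence_general
    {d : ℕ} (ν : Measure (Euc d)) [IsProbabilityMeasure ν] (hνD : ν (unitCube d)ᶜ = 0)
    (hac : ν ≪ (volume : Measure (Euc d)))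
    {n : ℕ}
    (ε : ℕ → ℝ) (hεpos : ∀ N, 0 < ε N) (hε : Tendsto ε atTop (𝓝 0))
    (XN : ℕ → Fin n → Euc d) (gN : ℕ → Fin n → ℝ)
    (X : Fin n → Euc d) (hX : Function.Injective X) (g : Fin n → ℝ)
    (hXconv : ∀ i, Tendsto (fun N => XN N i) atTop (𝓝 (X i)))
    (hgconv : ∀ i, Tendsto (fun N => gN N i) atTop (𝓝 (g i))) :
    ∀ i, Tendsto
      (fun N => ∫ y,
        |chiEpsH (XN N) (gN N) (ε N) ((2 : ℝ)⁻¹ ^ N) i y -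
          (LaguerreCell (unitCube d) X g i).indicator (1 : Euc d → ℝ) y| ∂ν)
      atTop (𝓝 0) := by
  intro i
  have hties : ∀ᵐ y ∂ν, ∀ j ≠ i, ‖y - X i‖ ^ 2 - g i ≠ ‖y - X j‖ ^ 2 - g j := by
    refine ae_all_iff.mpr fun j => eventually_imp_distrib_left.mpr fun hj => ae_iff.mpr ?_
    simpa only [not_not] using
      hac (addHaar_setOf_sqDist_sub_eq volume (hX.ne hj.symm) (g i) (g j))
  have hε' : Tendsto ε atTop (𝓝[>] 0) :=
    tendsto_nhdsWithin_iff.mpr ⟨hε, Eventually.of_forall hεpos⟩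
  have hh : Tendsto (fun N : ℕ => (2 : ℝ)⁻¹ ^ N) atTop (𝓝[>] 0) :=
    tendsto_pow_atTop_nhdsWithin_zero_of_lt_one (by norm_num) (by norm_num)
  have hlim : ∀ᵐ y ∂ν, Tendsto (fun N => chiEpsH (XN N) (gN N) (ε N) ((2 : ℝ)⁻¹ ^ N) i y)
      atTop (𝓝 ((LaguerreCell (unitCube d) X g i).indicator 1 y)) := by
    filter_upwards [ae_iff.mpr hνD, hties] with y hyD hy
    exact tendsto_chiEps_indicator_laguerreCell hXconv hgconv (tendsto_gridCenter hh y) hε'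
      hyD hy
  have hbound : ∀ N, ∀ᵐ y ∂ν, ‖chiEpsH (XN N) (gN N) (ε N) ((2 : ℝ)⁻¹ ^ N) i y‖ ≤ 1 :=
    fun N => Eventually.of_forall fun y =>
      (Real.norm_of_nonneg (chiEps_nonneg ..)).trans_le (chiEps_le_one ..)
  simpa only [Real.norm_eq_abs] using tendsto_integral_norm_sub_of_tendsto_ae
    (fun N => (measurable_chiEpsH _ _ _ _ i).aestronglyMeasurable) hbound hlim

/-- Proposition on joint convergence of the spatial discretization: if
`ε_N → 0`, `h_N = 2^{−N}`, and `(X^N, g^N) → (X, g)` with pairwise distinct sites, then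
`χ_i^{ε_N,h_N}[X^N, g^N] → χ_{L_i[X,g]}` in `L¹(ν)` for every `i`. -/
theorem chiEpsH_L1_convergence
    {d : ℕ} (ν : Measure (Euc d)) [IsProbabilityMeasure ν] (hνD : ν (unitCube d)ᶜ = 0)
    (hac : ν ≪ (volume : Measure (Euc d)))
    {n : ℕ} (hn : 0 < n)
    (ε : ℕ → ℝ) (hεpos : ∀ N, 0 < ε N) (hε : Tendsto ε atTop (𝓝 0))
    (XN : ℕ → Fin n → Euc d) (gN : ℕ → Fin n → ℝ)
    (hXN : ∀ N, Function.Injective (XN N))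
    (X : Fin n → Euc d) (hX : Function.Injective X) (g : Fin n → ℝ)
    (hXconv : ∀ i, Tendsto (fun N => XN N i) atTop (𝓝 (X i)))
    (hgconv : ∀ i, Tendsto (fun N => gN N i) atTop (𝓝 (g i))) :
    ∀ i, Tendsto
      (fun N => ∫ y,
        |chiEpsH (XN N) (gN N) (ε N) ((2 : ℝ)⁻¹ ^ N) i y -
          (LaguerreCell (unitCube d) X g i).indicator (1 : Euc d → ℝ) y| ∂ν)
      atTop (𝓝 0) :=
  chiEpsH_L1_convergence_general ν hνD hac ε hεpos hε XN gN X hX g hXconv hgconv
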